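/- States with zero mixing entropy are limits of pure states: let Ω ⊂ ℝ^n be a compact convex set and let α ∈ Ω satisfy S(α) = 0. Then α is the limit of a sequence of extreme points of Ω. -/

import Mathlib

/-!
A finite-dimensional compact convex set is the convex hull of its extreme points
(Minkowski–Carathéodory; by induction on the dimension: a point lies on a chord whose endpoints
are boundary points, and a boundary point lies in a supporting face of lower dimension). So `α`
admits decompositions into pure states (otherwise `mixEnt Ω α = sInf ∅ = 0` would say nothing),
and by `mixEnt Ω α = 0` some of them have arbitrarily small entropy `H`. Since
`-x log₂ x ≥ x (1 - x)` on `[0, 1]`, `H ≥ 1 - max pᵢ`; the pure state `vᵢ` of largest weight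
then satisfies `‖vᵢ - α‖ ≤ (1 - pᵢ) diam Ω ≤ H diam Ω`.
-/

/-- Shannon entropy (base 2) of a finite probability vector. -/
noncomputable def shannon {n : ℕ} (p : Fin n → ℝ) : ℝ :=
  ∑ i, -(p i * Real.logb 2 (p i))

/-- Mixing (preparation) entropy of a point `ω` of a convex set `Ω`:
the infimum of the Shannon entropies of the coefficients over all finite
convex decompositions of `ω` into extreme points of `Ω`. -/
noncomputable def mixEnt {V : Type*} [AddCommGroup V] [Module ℝ V]
    (Ω : Set V) (ω : V) : ℝ :=
  sInf {h : ℝ | ∃ (n : ℕ) (p : Fin n → ℝ) (v : Fin n → V),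
    (∀ i, 0 ≤ p i) ∧ (∑ i, p i = 1) ∧ (∀ i, v i ∈ Ω.extremePoints ℝ) ∧
    ω = ∑ i, p i • v i ∧ h = shannon p}

open Set Topology Module

theorem AffineMap.image_extremePoints_subset_of_injective {𝕜 V W : Type*} [Ring 𝕜]
    [PartialOrder 𝕜] [IsOrderedRing 𝕜] [AddCommGroup V] [Module 𝕜 V] [AddCommGroup W] [Module 𝕜 W]
    {g : V →ᵃ[𝕜] W} (hg : Function.Injective g) (s : Set V) :
    g '' s.extremePoints 𝕜 ⊆ (g '' s).extremePoints 𝕜 := by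
  rintro _ ⟨x, hx, rfl⟩
  refine ⟨mem_image_of_mem g hx.1, ?_⟩
  rintro _ ⟨y, hy, rfl⟩ _ ⟨z, hz, rfl⟩ hxyz
  rw [← image_openSegment, hg.mem_set_image] at hxyz
  obtain ⟨rfl, rfl⟩ := hx.2 hy hz hxyz
  simp

section

variable {E : Type*} [NormedAddCommGroup E] [NormedSpace ℝ E]

theorem AffineMap.isClosedEmbedding_of_injective {V : Type*} [NormedAddCommGroup V]
    [NormedSpace ℝ V] [FiniteDimensional ℝ V] {g : V →ᵃ[ℝ] E} (hg : Function.Injective g) :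
    IsClosedEmbedding g := by
  rw [g.decomp]
  exact (Homeomorph.addRight (g 0)).isClosedEmbedding.comp
    (LinearMap.isClosedEmbedding_of_injective
      (LinearMap.ker_eq_bot.2 (g.linear_injective_iff.2 hg)))

theorem exists_mem_segment_of_notMem_interior {Ω : Set E} (hΩ : IsCompact Ω) {x v : E}
    (hx : x ∈ Ω) (hv : v ≠ 0) :
    ∃ p ∈ Ω, ∃ q ∈ Ω, p ∉ interior Ω ∧ q ∉ interior Ω ∧ x ∈ segment ℝ p q := by
  set φ : ℝ →ᵃ[ℝ] E := AffineMap.lineMap x (x + v)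
  have hφ : Function.Injective φ := AffineMap.lineMap_injective ℝ (by simpa using hv)
  have hT : IsCompact (φ ⁻¹' Ω) :=
    (AffineMap.isClosedEmbedding_of_injective hφ).isCompact_preimage hΩ
  have h0 : (0 : ℝ) ∈ φ ⁻¹' Ω := by simpa [φ] using hx
  obtain ⟨a, ha, ha_least⟩ := hT.exists_isLeast ⟨0, h0⟩
  obtain ⟨b, hb, hb_greatest⟩ := hT.exists_isGreatest ⟨0, h0⟩
  have hint : φ ⁻¹' interior Ω ⊆ φ ⁻¹' Ω := preimage_mono interior_subset
  have hopen : IsOpen (φ ⁻¹' interior Ω) :=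
    isOpen_interior.preimage φ.continuous_of_finiteDimensional
  refine ⟨φ a, ha, φ b, hb, fun hai => ?_, fun hbi => ?_, ?_⟩
  · obtain ⟨t, hta, ht⟩ := Filter.Eventually.exists_lt (hopen.mem_nhds hai)
    exact hta.not_ge (ha_least (hint ht))
  · obtain ⟨t, hbt, ht⟩ := Filter.Eventually.exists_gt (hopen.mem_nhds hbi)
    exact hbt.not_ge (hb_greatest (hint ht))
  · rw [← image_segment, segment_eq_Icc (ha_least h0 |>.trans (hb_greatest h0))]
    exact ⟨0, ⟨ha_least h0, hb_greatest h0⟩, by simp [φ]⟩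

variable [FiniteDimensional ℝ E]

theorem exists_ne_zero_forall_le_of_notMem_interior {Ω : Set E} (hΩ : Convex ℝ Ω) {p : E}
    (hp : p ∈ Ω) (hpi : p ∉ interior Ω) :
    ∃ f : StrongDual ℝ E, f ≠ 0 ∧ ∀ a ∈ Ω, f a ≤ f p := by
  rcases (interior Ω).eq_empty_or_nonempty with hint | ⟨z, hz⟩
  · -- `Ω` lies in a hyperplane, on which some nonzero functional is constant
    have hspan : vectorSpan ℝ Ω < ⊤ := by
      refine lt_top_iff_ne_top.2 fun htop => ?_
      have := hΩ.interior_nonempty_iff_affineSpan_eq_top.2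
        ((AffineSubspace.affineSpan_eq_top_iff_vectorSpan_eq_top_of_nonempty ℝ E E ⟨p, hp⟩).2 htop)
      simp [hint] at this
    obtain ⟨f, hf0, hker⟩ := (vectorSpan ℝ Ω).exists_le_ker_of_lt_top hspan
    refine ⟨LinearMap.toContinuousLinearMap f, by simpa using hf0, fun a ha => le_of_eq ?_⟩
    have := hker (vsub_mem_vectorSpan ℝ ha hp)
    simp only [LinearMap.mem_ker, vsub_eq_sub, map_sub, sub_eq_zero] at this
    simpa using this
  · obtain ⟨f, hf⟩ := geometric_hahn_banach_open_point hΩ.interior isOpen_interior hpi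
    refine ⟨f, fun h => by simpa [h] using hf z hz, fun a ha => ?_⟩
    have hcl : a ∈ closure (interior Ω) := by
      rw [hΩ.closure_interior_eq_closure_of_nonempty_interior ⟨z, hz⟩]
      exact subset_closure ha
    exact closure_lt_subset_le f.continuous continuous_const
      (closure_mono (fun y hy => hf y hy) hcl)

theorem mem_convexHull_extremePoints_of_forall_le {f : StrongDual ℝ E}
    (hker : ∀ C : Set (LinearMap.ker (f : E →ₗ[ℝ] ℝ)), IsCompact C → Convex ℝ C →
      C ⊆ convexHull ℝ (C.extremePoints ℝ))
    {Ω : Set E} (hΩc : IsCompact Ω) (hΩ : Convex ℝ Ω) {p : E} (hp : p ∈ Ω)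
    (hmax : ∀ a ∈ Ω, f a ≤ f p) :
    p ∈ convexHull ℝ (Ω.extremePoints ℝ) := by
  set K := LinearMap.ker (f : E →ₗ[ℝ] ℝ)
  set F := f.toExposed Ω
  have hF : IsExposed ℝ Ω F := ContinuousLinearMap.toExposed.isExposed
  set g : K →ᵃ[ℝ] E := (AffineEquiv.constVAdd ℝ E p).toAffineMap.comp K.subtype.toAffineMap
  have hg_apply : ∀ w : K, g w = p + w := fun _ => rfl
  have hg : Function.Injective g := fun w w' h => Subtype.ext (by simpa [hg_apply] using h)
  have hpF : p ∈ F := ⟨hp, hmax⟩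
  have hgF : g '' (g ⁻¹' F) = F := by
    refine image_preimage_eq_of_subset fun x hx => ⟨⟨x - p, ?_⟩, by simp [hg_apply]⟩
    have : f x = f p := le_antisymm (hmax x hx.1) (hx.2 p hp)
    simp [K, this]
  have h0 : (0 : K) ∈ g ⁻¹' F := by simpa [hg_apply] using hpF
  have hhull := hker (g ⁻¹' F) ((AffineMap.isClosedEmbedding_of_injective hg).isCompact_preimage
    (hF.isCompact hΩc)) ((hF.convex hΩ).affine_preimage g) h0
  have : p ∈ convexHull ℝ (F.extremePoints ℝ) := by
    rw [← hgF]
    refine convexHull_mono (AffineMap.image_extremePoints_subset_of_injective hg _) ?_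
    rw [← AffineMap.image_convexHull]
    exact ⟨0, hhull, by simp [hg_apply]⟩
  exact convexHull_mono hF.isExtreme.extremePoints_subset_extremePoints this

theorem subset_convexHull_extremePoints_of_finrank_le (d : ℕ) (hd : finrank ℝ E ≤ d) {Ω : Set E}
    (hΩc : IsCompact Ω) (hΩ : Convex ℝ Ω) : Ω ⊆ convexHull ℝ (Ω.extremePoints ℝ) := by
  induction d generalizing E with
  | zero =>
    have : Subsingleton E := finrank_zero_iff.1 (Nat.le_zero.1 hd)
    rw [Ω.extremePoints_eq_self]
    exact subset_convexHull ℝ Ω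
  | succ d ih =>
    rcases subsingleton_or_nontrivial E with hE | hE
    · rw [Ω.extremePoints_eq_self]
      exact subset_convexHull ℝ Ω
    have hbdry : ∀ y ∈ Ω, y ∉ interior Ω → y ∈ convexHull ℝ (Ω.extremePoints ℝ) := by
      intro y hy hyi
      obtain ⟨f, hf0, hfy⟩ := exists_ne_zero_forall_le_of_notMem_interior hΩ hy hyi
      have hK : finrank ℝ (LinearMap.ker (f : E →ₗ[ℝ] ℝ)) ≤ d := by
        have := Module.Dual.finrank_ker_add_one_of_ne_zero (f := (f : E →ₗ[ℝ] ℝ))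
          (by rwa [Ne, ← ContinuousLinearMap.toLinearMap_zero, ContinuousLinearMap.coe_inj])
        omega
      exact mem_convexHull_extremePoints_of_forall_le (fun C hCc hC => ih hK hCc hC) hΩc hΩ hy hfy
    intro x hx
    obtain ⟨v, hv⟩ := exists_ne (0 : E)
    obtain ⟨p, hp, q, hq, hpi, hqi, hx⟩ := exists_mem_segment_of_notMem_interior hΩc hx hv
    exact (convex_convexHull ℝ _).segment_subset (hbdry p hp hpi) (hbdry q hq hqi) hx

theorem IsCompact.convexHull_extremePoints {Ω : Set E} (hΩc : IsCompact Ω) (hΩ : Convex ℝ Ω) :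
    convexHull ℝ (Ω.extremePoints ℝ) = Ω :=
  (convexHull_min extremePoints_subset hΩ).antisymm
    (subset_convexHull_extremePoints_of_finrank_le _ le_rfl hΩc hΩ)

end

theorem mul_one_sub_le_neg_mul_logb_two {x : ℝ} (h0 : 0 ≤ x) (h1 : x ≤ 1) :
    x * (1 - x) ≤ -(x * Real.logb 2 x) := by
  rcases h0.eq_or_lt with rfl | hx
  · simp
  have hlog : Real.log x ≤ 0 := Real.log_nonpos h0 h1
  have hlogb : Real.logb 2 x ≤ Real.log x := by
    rw [Real.logb, div_le_iff₀ (Real.log_pos one_lt_two)]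
    nlinarith [Real.log_two_lt_d9]
  nlinarith [Real.log_le_sub_one_of_pos hx]

theorem one_sub_le_shannon {m : ℕ} {p : Fin m → ℝ} (h0 : ∀ i, 0 ≤ p i) (h1 : ∑ i, p i = 1)
    {i : Fin m} (hi : ∀ j, p j ≤ p i) : 1 - p i ≤ shannon p :=
  calc 1 - p i = ∑ j, p j * (1 - p i) := by rw [← Finset.sum_mul, h1, one_mul]
    _ ≤ ∑ j, p j * (1 - p j) :=
      Finset.sum_le_sum fun j _ => mul_le_mul_of_nonneg_left (by linarith [hi j]) (h0 j)
    _ ≤ shannon p := Finset.sum_le_sum fun j _ =>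
      mul_one_sub_le_neg_mul_logb_two (h0 j)
        (h1 ▸ Finset.single_le_sum (fun k _ => h0 k) (Finset.mem_univ j))

theorem exists_one_sub_le_shannon {m : ℕ} {p : Fin m → ℝ} (h0 : ∀ i, 0 ≤ p i)
    (h1 : ∑ i, p i = 1) : ∃ i, 1 - p i ≤ shannon p := by
  have : Nonempty (Fin m) := by
    by_contra h
    simp [not_nonempty_iff.1 h] at h1
  obtain ⟨i, -, hi⟩ := Finset.exists_max_image Finset.univ p Finset.univ_nonempty
  exact ⟨i, one_sub_le_shannon h0 h1 fun j => hi j (Finset.mem_univ j)⟩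

theorem norm_sub_sum_smul_le {ι E : Type*} [Fintype ι] [DecidableEq ι] [SeminormedAddCommGroup E]
    [NormedSpace ℝ E] {p : ι → ℝ} (h0 : ∀ i, 0 ≤ p i) (h1 : ∑ i, p i = 1) (v : ι → E) (i : ι)
    {D : ℝ} (hD : ∀ j, ‖v i - v j‖ ≤ D) : ‖v i - ∑ j, p j • v j‖ ≤ (1 - p i) * D := by
  have hv : v i - ∑ j, p j • v j = ∑ j, p j • (v i - v j) := by
    simp only [smul_sub, Finset.sum_sub_distrib, ← Finset.sum_smul, h1, one_smul]
  calc ‖v i - ∑ j, p j • v j‖ ≤ ∑ j, p j * ‖v i - v j‖ := by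
        rw [hv]
        refine (norm_sum_le _ _).trans_eq (Finset.sum_congr rfl fun j _ => ?_)
        rw [norm_smul, Real.norm_of_nonneg (h0 j)]
    _ = ∑ j ∈ Finset.univ.erase i, p j * ‖v i - v j‖ :=
        (Finset.sum_erase _ (by simp)).symm
    _ ≤ ∑ j ∈ Finset.univ.erase i, p j * D :=
        Finset.sum_le_sum fun j _ => mul_le_mul_of_nonneg_left (hD j) (h0 j)
    _ = (1 - p i) * D := by
        rw [← Finset.sum_mul, Finset.sum_erase_eq_sub (Finset.mem_univ i), h1]

theorem exists_shannon_lt_of_mixEnt_lt {V : Type*} [AddCommGroup V] [Module ℝ V] {Ω : Set V}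
    {ω : V} (hω : ω ∈ convexHull ℝ (Ω.extremePoints ℝ)) {ε : ℝ} (hε : mixEnt Ω ω < ε) :
    ∃ (m : ℕ) (p : Fin m → ℝ) (v : Fin m → V), (∀ i, 0 ≤ p i) ∧ (∑ i, p i = 1) ∧
      (∀ i, v i ∈ Ω.extremePoints ℝ) ∧ ω = ∑ i, p i • v i ∧ shannon p < ε := by
  obtain ⟨ι, _, w, z, hw0, hw1, hz, rfl⟩ := mem_convexHull_iff_exists_fintype.1 hω
  let e := (Fintype.equivFin ι).symm
  have hne : {h : ℝ | ∃ (n : ℕ) (p : Fin n → ℝ) (v : Fin n → V),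
      (∀ i, 0 ≤ p i) ∧ (∑ i, p i = 1) ∧ (∀ i, v i ∈ Ω.extremePoints ℝ) ∧
      ∑ i, w i • z i = ∑ i, p i • v i ∧ h = shannon p}.Nonempty :=
    ⟨_, _, w ∘ e, z ∘ e, fun _ => hw0 _, by rw [← hw1, ← e.sum_comp]; rfl, fun _ => hz _,
      by rw [← e.sum_comp]; rfl, rfl⟩
  obtain ⟨_, ⟨m, p, v, hp0, hp1, hv, hsum, rfl⟩, hlt⟩ := exists_lt_of_csInf_lt hne hε
  exact ⟨m, p, v, hp0, hp1, hv, hsum, hlt⟩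

theorem exists_mem_extremePoints_dist_le_of_mixEnt_lt {V : Type*} [SeminormedAddCommGroup V]
    [NormedSpace ℝ V] {Ω : Set V} (hΩ : Bornology.IsBounded Ω) {ω : V}
    (hω : ω ∈ convexHull ℝ (Ω.extremePoints ℝ)) {ε : ℝ} (hε : mixEnt Ω ω < ε) :
    ∃ u ∈ Ω.extremePoints ℝ, dist u ω ≤ ε * Metric.diam Ω := by
  classical
  obtain ⟨m, p, v, hp0, hp1, hv, rfl, hlt⟩ := exists_shannon_lt_of_mixEnt_lt hω hε
  obtain ⟨i, hi⟩ := exists_one_sub_le_shannon hp0 hp1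
  have hdiam : ∀ j, ‖v i - v j‖ ≤ Metric.diam Ω := fun j => by
    rw [← dist_eq_norm]
    exact Metric.dist_le_diam_of_mem hΩ (extremePoints_subset (hv i)) (extremePoints_subset (hv j))
  refine ⟨v i, hv i, ?_⟩
  rw [dist_eq_norm]
  exact (norm_sub_sum_smul_le hp0 hp1 v i hdiam).trans
    (mul_le_mul_of_nonneg_right (by linarith) Metric.diam_nonneg)

/-- a state of zero mixing entropy is a limit of pure states
(extreme points). -/
theorem limit_of_pure_of_mixEnt_eq_zero {n : ℕ} (Ω : Set (Fin n → ℝ))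
    (hconv : Convex ℝ Ω) (hcomp : IsCompact Ω)
    (α : Fin n → ℝ) (hα : α ∈ Ω) (hS : mixEnt Ω α = 0) :
    ∃ u : ℕ → (Fin n → ℝ), (∀ k, u k ∈ Ω.extremePoints ℝ) ∧
      Filter.Tendsto u Filter.atTop (nhds α) := by
  have hhull : α ∈ convexHull ℝ (Ω.extremePoints ℝ) := by
    rwa [hcomp.convexHull_extremePoints hconv]
  have hclose : ∀ k : ℕ, ∃ u ∈ Ω.extremePoints ℝ, dist u α ≤ 1 / (k + 1) * Metric.diam Ω :=
    fun k => exists_mem_extremePoints_dist_le_of_mixEnt_lt hcomp.isBounded hhull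
      (hS ▸ Nat.one_div_pos_of_nat)
  choose u hu hdist using hclose
  refine ⟨u, hu, tendsto_iff_dist_tendsto_zero.2 (squeeze_zero (fun _ => dist_nonneg) hdist ?_)⟩
  simpa using tendsto_one_div_add_atTop_nhds_zero_nat.mul_const (Metric.diam Ω)
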